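/- arXiv:2311.17896 — 5 statements merged into one kernel-verified Lean document; each statement's English description precedes it below -/
import Mathlib

section
/- Let ξ ∈ F and let v ∈ F⁴ satisfy H(v) = 2ξ·Q(v)^{(q+1)/2} and H(v) ≠ 0. If ξ ∈ Z₁ then v is nonsingular, and if ξ ∈ Z₂ then v is not nonsingular. (All points of a surface in the family S̃¹ are nonsingular, and all points of a surface in the family S̃² are singular.) -/
set_option maxHeartbeats 1000000


/-- `Q(α,β,γ,δ) = αδ - βγ`, the quadratic form of the hyperbolic quadric. -/
def Qf {F : Type*} [Field F] (v : Fin 4 → F) : F := v 0 * v 3 - v 1 * v 2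

/-- `H(α,β,γ,δ) = α^{q+1} - β^{q+1} - γ^{q+1} + δ^{q+1}`, the Hermitian form. -/
def Hf (q : ℕ) {F : Type*} [Field F] (v : Fin 4 → F) : F :=
  v 0 ^ (q + 1) - v 1 ^ (q + 1) - v 2 ^ (q + 1) + v 3 ^ (q + 1)

/-- `v = (α,β,γ,δ)` is nonsingular if `(αz + δ^q z^q)x + (γz + β^q z^q)x^q ≠ 0`
for all nonzero `x, z`. -/
def Nonsingular (q : ℕ) {F : Type*} [Field F] (v : Fin 4 → F) : Prop :=
  ∀ x z : F, x ≠ 0 → z ≠ 0 →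
    (v 0 * z + v 3 ^ q * z ^ q) * x + (v 2 * z + v 1 ^ q * z ^ q) * x ^ q ≠ 0

/-- `Δ(v) = H(v)² - 4·Q(v)^{q+1}`. -/
def Deltaf (q : ℕ) {F : Type*} [Field F] (v : Fin 4 → F) : F :=
  Hf q v ^ 2 - 4 * Qf v ^ (q + 1)

/-- A Σ-vector: a nonzero vector of the form `(α, β, β^q, α^q)`. -/
def IsSigmaVec (q : ℕ) {F : Type*} [Field F] (v : Fin 4 → F) : Prop :=
  v ≠ 0 ∧ ∃ α β : F, v = ![α, β, β ^ q, α ^ q]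

/-- The sesquilinear form `h(u,v) = u₁v₁^q - u₂v₂^q - u₃v₃^q + u₄v₄^q`. -/
def hForm (q : ℕ) {F : Type*} [Field F] (u v : Fin 4 → F) : F :=
  u 0 * v 0 ^ q - u 1 * v 1 ^ q - u 2 * v 2 ^ q + u 3 * v 3 ^ q

/-- The one-dimensional `F`-subspace (as a set) spanned by `v`. -/
def Fline {F : Type*} [Field F] (v : Fin 4 → F) : Set (Fin 4 → F) :=
  {x | ∃ a : F, x = a • v}

/-- The number of one-dimensional `𝔽_q`-subspaces `⟨(s,t)⟩` of `𝔽_q²` with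
`Q(s·u + t·w) = 0`. -/
noncomputable def tangentCount (q : ℕ) {F : Type*} [Field F] (u w : Fin 4 → F) : ℕ :=
  Set.ncard {L : Set (F × F) | ∃ s t : F, s ^ q = s ∧ t ^ q = t ∧ (s, t) ≠ (0, 0) ∧
    Qf (fun i => s * u i + t * w i) = 0 ∧
    L = {p : F × F | ∃ e : F, e ^ q = e ∧ p = (e * s, e * t)}}

/-- `Z₁`: the set of `ξ ∉ {0, 1, -1}` such that `1 - ξ⁻²` is a nonzero square of `𝔽_q`. -/
def Zone (q : ℕ) (F : Type*) [Field F] : Set F :=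
  {ξ | ξ ≠ 0 ∧ ξ ≠ 1 ∧ ξ ≠ -1 ∧ ∃ s : F, s ^ q = s ∧ s ≠ 0 ∧ 1 - (ξ ^ 2)⁻¹ = s ^ 2}

/-- `Z₂`: the set of `ξ ≠ 0` such that `1 - ξ⁻²` is a nonzero nonsquare of `𝔽_q`. -/
def Ztwo (q : ℕ) (F : Type*) [Field F] : Set F :=
  {ξ | ξ ≠ 0 ∧ (1 - (ξ ^ 2)⁻¹) ^ q = 1 - (ξ ^ 2)⁻¹ ∧ 1 - (ξ ^ 2)⁻¹ ≠ 0 ∧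
    ¬∃ s : F, s ^ q = s ∧ 1 - (ξ ^ 2)⁻¹ = s ^ 2}

/-- Points of the surface `S_ξ` away from the Hermitian surface are nonsingular when
`ξ ∈ Z₁` and singular when `ξ ∈ Z₂`. -/
theorem stmt12 (q : ℕ) (hq : ∃ p k : ℕ, p.Prime ∧ 0 < k ∧ q = p ^ k) (hodd : Odd q)
    (F : Type*) [Field F] [Fintype F] (hF : Fintype.card F = q ^ 2)
    (ξ : F) (v : Fin 4 → F)
    (hS : Hf q v = 2 * ξ * Qf v ^ ((q + 1) / 2)) (hH : Hf q v ≠ 0) :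
    (ξ ∈ Zone q F → Nonsingular q v) ∧ (ξ ∈ Ztwo q F → ¬Nonsingular q v) := by
  classical
  obtain ⟨p, k, hp, hk, hqe⟩ := hq
  haveI : Fact p.Prime := ⟨hp⟩
  have hq2 : 2 ≤ q := by
    have h1 : 2 ≤ p ^ k := le_trans hp.two_le (Nat.le_self_pow (by omega) p)
    omega
  have hp2 : p ≠ 2 := by
    intro h
    have hdvd : p ∣ q := by rw [hqe]; exact dvd_pow_self p (by omega)
    rw [h] at hdvd
    rcases hodd with ⟨r, hr⟩
    omega
  have hcast : ((p : F)) = 0 := by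
    have h1 : ((Fintype.card F : ℕ) : F) = 0 := FiniteField.cast_card_eq_zero F
    rw [hF, hqe, ← pow_mul] at h1
    push_cast at h1
    exact pow_eq_zero_iff (by positivity) |>.mp h1
  have hrc : ringChar F = p := by
    have hdvd : ringChar F ∣ p := ringChar.dvd hcast
    have hne1 : ringChar F ≠ 1 := CharP.ringChar_ne_one
    rcases (Nat.Prime.eq_one_or_self_of_dvd hp _ hdvd) with h | h
    · exact absurd h hne1
    · exact h
  haveI hcharP : CharP F p := ringChar.of_eq hrc
  have fa : ∀ a b : F, (a + b) ^ q = a ^ q + b ^ q := by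
    intro a b; rw [hqe]; exact add_pow_char_pow a b p k
  have fsub : ∀ a b : F, (a - b) ^ q = a ^ q - b ^ q := by
    intro a b; rw [hqe]; exact sub_pow_char_pow a b k
  have fq2 : ∀ a : F, (a ^ q) ^ q = a := by
    intro a
    rw [← pow_mul]
    have h2 : q * q = Fintype.card F := by rw [hF]; ring
    rw [h2, FiniteField.pow_card]
  have fneg : ∀ a : F, (-a) ^ q = -(a ^ q) := fun a => Odd.neg_pow hodd a
  have htwo : (2 : F) ≠ 0 := by
    intro h
    have hpd : p ∣ 2 := (CharP.cast_eq_zero_iff F p 2).mp (by exact_mod_cast h)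
    exact hp2 ((Nat.prime_dvd_prime_iff_eq hp Nat.prime_two).mp hpd)
  have f2 : (2 : F) ^ q = 2 := by
    have := fa 1 1; norm_num at this; convert this using 2
  obtain ⟨m, hq1⟩ : ∃ m, q + 1 = 2 * m := by
    obtain ⟨r, hr⟩ := hodd; exact ⟨r + 1, by omega⟩
  have hqm : (q + 1) / 2 = m := by omega
  set c := Qf v with hc
  set H := Hf q v with hHdef
  set σ := c ^ m with hσ
  have hS' : H = 2 * ξ * σ := by rw [hσ, ← hqm]; exact hS
  have hσ2' : σ ^ 2 = c ^ q * c := by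
    rw [hσ, ← pow_mul, ← pow_succ]
    congr 1; omega
  have hξ0 : ξ ≠ 0 := by
    intro h; apply hH; rw [hS', h]; ring
  have hσ0 : σ ≠ 0 := by
    intro h; apply hH; rw [hS', h]; ring
  have hc0 : c ≠ 0 := by
    intro h; apply hσ0; rw [hσ, h]; exact zero_pow (by omega)
  have hcq0 : c ^ q ≠ 0 := pow_ne_zero _ hc0
  have hHq : H ^ q = H := by
    have e : ∀ a : F, (a ^ (q+1)) ^ q = a ^ (q+1) := by
      intro a
      rw [pow_succ, mul_pow, fq2]
      ring
    rw [hHdef]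
    show (Hf q v) ^ q = Hf q v
    unfold Hf
    rw [fa, fsub, fsub, e, e, e, e]
  have hξσq : (ξ * σ) ^ q = ξ * σ := by
    have h1 : (2 * ξ * σ) ^ q = 2 * ξ * σ := by rw [← hS']; exact hHq
    rw [mul_pow, mul_pow, f2] at h1
    have h2 := mul_left_cancel₀ htwo (by linear_combination h1 :
      (2 : F) * (ξ ^ q * σ ^ q) = 2 * (ξ * σ))
    rw [mul_pow]; exact h2
  have hce : c = v 0 * v 3 - v 1 * v 2 := rfl
  have hcq : c ^ q = v 0 ^ q * v 3 ^ q - v 1 ^ q * v 2 ^ q := by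
    rw [hce, fsub, mul_pow, mul_pow]
  have hHe : H = v 0 ^ q * v 0 - v 1 ^ q * v 1 - v 2 ^ q * v 2 + v 3 ^ q * v 3 := by
    rw [hHdef]; show Hf q v = _; unfold Hf
    rw [pow_succ, pow_succ, pow_succ, pow_succ]
  have key : ∀ z : F, (v 0 * z + v 3 ^ q * z ^ q) ^ (q+1) - (v 2 * z + v 1 ^ q * z ^ q) ^ (q+1)
      = H * (z ^ q * z) + c * z ^ 2 + c ^ q * (z ^ q) ^ 2 := by
    intro z
    have eA : (v 0 * z + v 3 ^ q * z ^ q) ^ q = v 0 ^ q * z ^ q + v 3 * z := by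
      rw [fa, mul_pow, mul_pow, fq2, fq2]
    have eB : (v 2 * z + v 1 ^ q * z ^ q) ^ q = v 2 ^ q * z ^ q + v 1 * z := by
      rw [fa, mul_pow, mul_pow, fq2, fq2]
    rw [pow_succ, pow_succ, eA, eB, hHe, hcq, hce]
    ring
  have hnf : ∃ t : F, t ^ q ≠ t := by
    by_contra hcon
    push_neg at hcon
    have hdeg : (Polynomial.X ^ q - Polynomial.X : Polynomial F).natDegree = q := by
      have hlt : (Polynomial.X : Polynomial F).natDegree
          < ((Polynomial.X : Polynomial F) ^ q).natDegree := by
        rw [Polynomial.natDegree_X_pow, Polynomial.natDegree_X]; omega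
      rw [Polynomial.natDegree_sub_eq_left_of_natDegree_lt hlt, Polynomial.natDegree_X_pow]
    have hPne : (Polynomial.X ^ q - Polynomial.X : Polynomial F) ≠ 0 := by
      intro h; rw [h] at hdeg; simp at hdeg; omega
    have hsub : (Finset.univ : Finset F) ⊆
        (Polynomial.X ^ q - Polynomial.X : Polynomial F).roots.toFinset := by
      intro t _
      rw [Multiset.mem_toFinset, Polynomial.mem_roots hPne]
      simp [Polynomial.IsRoot, sub_eq_zero, hcon t]
    have h1 := Finset.card_le_card hsub
    have h2 := (Polynomial.X ^ q - Polynomial.X : Polynomial F).roots.toFinset_card_le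
    have h3 := Polynomial.card_roots' (Polynomial.X ^ q - Polynomial.X : Polynomial F)
    rw [hdeg] at h3
    rw [Finset.card_univ, hF] at h1
    have h4 : q ^ 2 ≤ q := le_trans h1 (le_trans h2 h3)
    nlinarith
  have h90 : ∀ u : F, u ^ q * u = 1 → ∃ z : F, z ≠ 0 ∧ z ^ q = u * z := by
    intro u hu
    have hu0 : u ≠ 0 := by
      intro h; rw [h] at hu; simp at hu
    have huq : u ^ q = u⁻¹ := eq_inv_of_mul_eq_one_left hu
    by_cases h1 : (1 : F) + u = 0
    · have hum : u = -1 := by linear_combination h1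
      obtain ⟨t, ht⟩ := hnf
      refine ⟨t - t ^ q, sub_ne_zero.mpr (fun h => ht h.symm), ?_⟩
      rw [fsub, fq2, hum]; ring
    · refine ⟨1 + u⁻¹, ?_, ?_⟩
      · intro h
        apply h1
        have h2 : u * (1 + u⁻¹) = 0 := by rw [h]; ring
        rw [mul_add, mul_inv_cancel₀ hu0] at h2
        linear_combination h2
      · rw [fa, one_pow, inv_pow, huq, inv_inv, mul_add, mul_inv_cancel₀ hu0]
        ring
  have hinv : ξ ^ 2 * (ξ ^ 2)⁻¹ = 1 := mul_inv_cancel₀ (pow_ne_zero _ hξ0)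
  constructor
  · -- Z₁ : nonsingular
    rintro ⟨-, -, -, s, hsq, hs0, hsval⟩ x z hx hz hcontra
    have f2' : ξ ^ 2 * s ^ 2 = ξ ^ 2 - 1 := by
      linear_combination (-ξ^2) * hsval - hinv
    set A := v 0 * z + v 3 ^ q * z ^ q with hA
    set B := v 2 * z + v 1 ^ q * z ^ q with hB
    have hAx : A * x = -(B * x ^ q) := by linear_combination hcontra
    have heven : Even (q + 1) := Odd.add_one hodd
    have h1 : (A * x) ^ (q + 1) = (B * x ^ q) ^ (q + 1) := by
      rw [hAx, Even.neg_pow heven]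
    rw [pow_succ, pow_succ, mul_pow, mul_pow, fq2] at h1
    have hxx : x ^ q * x ≠ 0 := mul_ne_zero (pow_ne_zero _ hx) hx
    have hAB : A ^ (q+1) = B ^ (q+1) := by
      have h2 : A ^ (q+1) * (x ^ q * x) = B ^ (q+1) * (x ^ q * x) := by
        rw [pow_succ, pow_succ]; linear_combination h1
      exact mul_right_cancel₀ hxx h2
    have hzero : H * (z ^ q * z) + c * z ^ 2 + c ^ q * (z ^ q) ^ 2 = 0 := by
      rw [← key z, hAB]; ring
    set u := z ^ q * z⁻¹ with hu
    have hzq : z ^ q = u * z := by rw [hu]; field_simp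
    have hu1 : u ^ q * u = 1 := by
      rw [hu, mul_pow, inv_pow, fq2]
      field_simp
    have hquad : c ^ q * u ^ 2 + H * u + c = 0 := by
      have hz2 : (z : F) ^ 2 ≠ 0 := pow_ne_zero _ hz
      have h5 : (c ^ q * u ^ 2 + H * u + c) * z ^ 2 = 0 := by
        rw [hzq] at hzero; linear_combination hzero
      exact (mul_eq_zero.mp h5).resolve_right hz2
    have hsq2 : (c ^ q * u + ξ * σ) ^ 2 = (ξ * σ * s) ^ 2 := by
      linear_combination c ^ q * hquad - (c ^ q * u) * hS' + hσ2' - σ ^ 2 * f2'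
    have hfac : (c ^ q * u + ξ * σ - ξ * σ * s) * (c ^ q * u + ξ * σ + ξ * σ * s) = 0 := by
      linear_combination hsq2
    have hnormu : (c ^ q * u) ^ q * (c ^ q * u) = σ ^ 2 := by
      rw [mul_pow, fq2, hσ2']
      linear_combination (c * c ^ q) * hu1
    rcases mul_eq_zero.mp hfac with h | h
    · have hr : c ^ q * u = ξ * σ * (s - 1) := by linear_combination h
      have hnorm2 : σ ^ 2 = (ξ * σ) ^ 2 * (s - 1) ^ 2 := by
        have e1 : (ξ * σ * (s - 1)) ^ q = ξ * σ * (s - 1) := by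
          rw [mul_pow, hξσq, fsub, hsq, one_pow]
        rw [← hnormu, hr, e1]; ring
      have f1 : ξ ^ 2 * (s - 1) ^ 2 = 1 := by
        have h6 : σ ^ 2 * (ξ ^ 2 * (s - 1) ^ 2 - 1) = 0 := by linear_combination -hnorm2
        have h7 := (mul_eq_zero.mp h6).resolve_left (pow_ne_zero 2 hσ0)
        linear_combination h7
      have h2 : (2 * ξ ^ 2 * s) * (s - 1) = 0 := by linear_combination f1 + f2'
      rcases mul_eq_zero.mp h2 with h8 | h8
      · exact (mul_ne_zero (mul_ne_zero htwo (pow_ne_zero 2 hξ0)) hs0) h8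
      · rw [sub_eq_zero] at h8
        rw [h8, sub_self] at f1
        simp at f1
    · have hr : c ^ q * u = -(ξ * σ * (s + 1)) := by linear_combination h
      have hnorm2 : σ ^ 2 = (ξ * σ) ^ 2 * (s + 1) ^ 2 := by
        have e1 : (ξ * σ * (s + 1)) ^ q = ξ * σ * (s + 1) := by
          rw [mul_pow, hξσq, fa, hsq, one_pow]
        rw [← hnormu, hr, fneg, e1]; ring
      have f1 : ξ ^ 2 * (s + 1) ^ 2 = 1 := by
        have h6 : σ ^ 2 * (ξ ^ 2 * (s + 1) ^ 2 - 1) = 0 := by linear_combination -hnorm2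
        have h7 := (mul_eq_zero.mp h6).resolve_left (pow_ne_zero 2 hσ0)
        linear_combination h7
      have h2 : (2 * ξ ^ 2 * s) * (s + 1) = 0 := by linear_combination f1 + f2'
      rcases mul_eq_zero.mp h2 with h8 | h8
      · exact (mul_ne_zero (mul_ne_zero htwo (pow_ne_zero 2 hξ0)) hs0) h8
      · have h9 : s = -1 := by linear_combination h8
        rw [h9] at f1
        simp at f1
  · -- Z₂ : singular
    rintro ⟨-, hηq, hη0, hηns⟩ hns
    have hrc2 : ringChar F ≠ 2 := by rw [hrc]; exact hp2
    have hcard2 : Fintype.card F / 2 = (q - 1) * m := by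
      obtain ⟨r, hr⟩ : ∃ r, q = r + 1 := ⟨q - 1, by omega⟩
      have e1 : q ^ 2 = 2 * (r * m) + 1 := by
        have e2 : r + 2 = 2 * m := by omega
        have e3 : q ^ 2 = r * (r + 2) + 1 := by rw [hr]; ring
        rw [e3, e2]; ring
      rw [hF, e1, Nat.mul_add_div (by norm_num), show q - 1 = r by omega]
      norm_num
    have hsq_ex : IsSquare (1 - (ξ ^ 2)⁻¹) := by
      rw [FiniteField.isSquare_iff hrc2 hη0, hcard2]
      have hηq1 : (1 - (ξ ^ 2)⁻¹) ^ (q - 1) = 1 := by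
        obtain ⟨r, hr⟩ : ∃ r, q = r + 1 := ⟨q - 1, by omega⟩
        have e4 : (1 - (ξ ^ 2)⁻¹) ^ r * (1 - (ξ ^ 2)⁻¹) = (1 - (ξ ^ 2)⁻¹) ^ q := by
          rw [hr]; exact (pow_succ _ r).symm
        rw [hηq] at e4
        have h3 := mul_right_cancel₀ hη0 (by rw [e4, one_mul] :
          (1 - (ξ ^ 2)⁻¹) ^ r * (1 - (ξ ^ 2)⁻¹) = 1 * (1 - (ξ ^ 2)⁻¹))
        have e5 : q - 1 = r := by omega
        rw [e5, h3]
      rw [pow_mul, hηq1, one_pow]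
    obtain ⟨s, hs⟩ := hsq_ex
    have hs2 : s ^ 2 = 1 - (ξ ^ 2)⁻¹ := by rw [sq]; exact hs.symm
    have hs0 : s ≠ 0 := by
      intro h; rw [h] at hs2; apply hη0; rw [← hs2]; ring
    have hsqq : s ^ q = -s := by
      have h1 : (s ^ q - s) * (s ^ q + s) = 0 := by
        have h2 : (s ^ q) ^ 2 = s ^ 2 := by
          rw [← pow_mul, mul_comm q 2, pow_mul, hs2, hηq, ← hs2]
        linear_combination h2
      rcases mul_eq_zero.mp h1 with h | h
      · rw [sub_eq_zero] at h
        exact absurd ⟨s, h, hs2.symm⟩ hηns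
      · linear_combination h
    set u := ξ * σ * (s - 1) * (c ^ q)⁻¹ with hu
    have hcu : c ^ q * u = ξ * σ * (s - 1) := by
      rw [hu]; field_simp
    have hrq : (ξ * σ * (s - 1)) ^ q = ξ * σ * (-s - 1) := by
      rw [mul_pow, hξσq, fsub, hsqq, one_pow]
    have hu1 : u ^ q * u = 1 := by
      have h1 : (c ^ q * u) ^ q * (c ^ q * u) = σ ^ 2 * (u ^ q * u) := by
        rw [mul_pow, fq2, hσ2']; ring
      have h2 : (c ^ q * u) ^ q * (c ^ q * u) = σ ^ 2 := by
        rw [hcu, hrq]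
        linear_combination (-(ξ ^ 2 * σ ^ 2)) * hs2 + σ ^ 2 * hinv
      have h3 : σ ^ 2 * (u ^ q * u) = σ ^ 2 * 1 := by rw [← h1, h2, mul_one]
      exact mul_left_cancel₀ (pow_ne_zero 2 hσ0) h3
    have hquad : c ^ q * u ^ 2 + H * u + c = 0 := by
      have h1 : c ^ q * (c ^ q * u ^ 2 + H * u + c) = 0 := by
        rw [hS']
        linear_combination (c ^ q * u + ξ * σ * (s - 1) + 2 * ξ * σ) * hcu
          + (ξ ^ 2 * σ ^ 2) * hs2 - σ ^ 2 * hinv - hσ2'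
      exact (mul_eq_zero.mp h1).resolve_left hcq0
    obtain ⟨z, hz0, hzq⟩ := h90 u hu1
    have hABeq : (v 0 * z + v 3 ^ q * z ^ q) ^ (q + 1)
        = (v 2 * z + v 1 ^ q * z ^ q) ^ (q + 1) := by
      have h1 := key z
      have h2 : H * (z ^ q * z) + c * z ^ 2 + c ^ q * (z ^ q) ^ 2 = 0 := by
        rw [hzq]
        linear_combination z ^ 2 * hquad
      linear_combination h1 + h2
    by_cases hBz : (v 2 * z + v 1 ^ q * z ^ q) = 0
    · have hAz : (v 0 * z + v 3 ^ q * z ^ q) = 0 := by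
        have h3 : (v 0 * z + v 3 ^ q * z ^ q) ^ (q + 1) = 0 := by
          rw [hABeq, hBz]; exact zero_pow (by omega)
        exact pow_eq_zero_iff (n := q + 1) (by omega) |>.mp h3
      exact hns 1 z one_ne_zero hz0 (by rw [hAz, hBz]; ring)
    · have hAz : (v 0 * z + v 3 ^ q * z ^ q) ≠ 0 := by
        intro h
        apply hBz
        have h3 : (v 2 * z + v 1 ^ q * z ^ q) ^ (q + 1) = 0 := by
          rw [← hABeq, h]; exact zero_pow (by omega)
        exact pow_eq_zero_iff (n := q + 1) (by omega) |>.mp h3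
      set A := v 0 * z + v 3 ^ q * z ^ q with hA
      set B := v 2 * z + v 1 ^ q * z ^ q with hB
      have hu'1 : (-(A * B⁻¹)) ^ q * (-(A * B⁻¹)) = 1 := by
        rw [fneg, mul_pow, inv_pow]
        have h1 : A ^ q * A = B ^ q * B := by
          have h4 := hABeq; rw [pow_succ, pow_succ] at h4; exact h4
        field_simp
        linear_combination h1
      obtain ⟨x, hx0, hxq⟩ := h90 (-(A * B⁻¹)) hu'1
      apply hns x z hx0 hz0
      rw [← hA, ← hB, hxq]
      field_simp
      ring
end

section
/- For all a, b, c, d ∈ F, let A = [[a, b], [b^q, a^q]] and B = [[c, d], [d^q, c^q]] be 2×2 matrices over F. Then for every 2×2 matrix M over F one has H(A·M·Bᵀ) = det(A)·det(B)·H(M), where for M = [[α,β],[γ,δ]] we write H(M) = α^{q+1} − β^{q+1} − γ^{q+1} + δ^{q+1}. Consequently, if det(A)·det(B) = 1 and ξ ∈ F, then H(M) = 2ξ·det(M)^{(q+1)/2} implies H(A·M·Bᵀ) = 2ξ·det(A·M·Bᵀ)^{(q+1)/2} (the group preserving the subquadric Q₀ with trivial determinant preserves each surface S_ξ). -/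
open Matrix

/-- `H(M) = α^{q+1} - β^{q+1} - γ^{q+1} + δ^{q+1}` for `M = [[α,β],[γ,δ]]`. -/
def Hmat (q : ℕ) {F : Type*} [Field F] (M : Matrix (Fin 2) (Fin 2) F) : F :=
  M 0 0 ^ (q + 1) - M 0 1 ^ (q + 1) - M 1 0 ^ (q + 1) + M 1 1 ^ (q + 1)

/-- For `A = [[a,b],[b^q,a^q]]` and `B = [[c,d],[d^q,c^q]]` we have
`H(A·M·Bᵀ) = det(A)·det(B)·H(M)`; consequently if `det(A)·det(B) = 1` the
transformation `M ↦ A·M·Bᵀ` preserves each surface `S_ξ`. -/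
theorem stmt13 (q : ℕ) (hq : ∃ p k : ℕ, p.Prime ∧ 0 < k ∧ q = p ^ k) (hodd : Odd q)
    (F : Type*) [Field F] [Fintype F] (hF : Fintype.card F = q ^ 2)
    (a b c d : F) :
    (∀ M : Matrix (Fin 2) (Fin 2) F,
      Hmat q (!![a, b; b ^ q, a ^ q] * M * (!![c, d; d ^ q, c ^ q])ᵀ) =
        (!![a, b; b ^ q, a ^ q]).det * (!![c, d; d ^ q, c ^ q]).det * Hmat q M) ∧
    ((!![a, b; b ^ q, a ^ q]).det * (!![c, d; d ^ q, c ^ q]).det = 1 →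
      ∀ (ξ : F) (M : Matrix (Fin 2) (Fin 2) F),
        Hmat q M = 2 * ξ * M.det ^ ((q + 1) / 2) →
        Hmat q (!![a, b; b ^ q, a ^ q] * M * (!![c, d; d ^ q, c ^ q])ᵀ) =
          2 * ξ * (!![a, b; b ^ q, a ^ q] * M * (!![c, d; d ^ q, c ^ q])ᵀ).det
            ^ ((q + 1) / 2)) := by
  -- Frobenius facts
  have hfrob : (∀ x y : F, (x + y) ^ q = x ^ q + y ^ q) ∧ (∀ x : F, (x ^ q) ^ q = x) := by
    obtain ⟨p, k, hp, hk, rfl⟩ := hq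
    have hrc : ringChar F = p := by
      have hp' : (ringChar F).Prime := CharP.char_is_prime F _
      obtain ⟨n, _, hcard⟩ := FiniteField.card F (ringChar F)
      have hdvd : ringChar F ∣ p ^ (k * 2) := by
        rw [pow_mul, ← hF, hcard]
        exact dvd_pow_self _ n.pos.ne'
      exact (Nat.prime_dvd_prime_iff_eq hp' hp).mp (hp'.dvd_of_dvd_pow hdvd)
    haveI : CharP F p := hrc ▸ ringChar.charP F
    haveI : Fact p.Prime := ⟨hp⟩
    refine ⟨fun x y => add_pow_char_pow x y p k, fun x => ?_⟩
    rw [← pow_mul, ← sq, ← hF]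
    exact FiniteField.pow_card x
  obtain ⟨hadd, hqq⟩ := hfrob
  have hmain : ∀ M : Matrix (Fin 2) (Fin 2) F,
      Hmat q (!![a, b; b ^ q, a ^ q] * M * (!![c, d; d ^ q, c ^ q])ᵀ) =
        (!![a, b; b ^ q, a ^ q]).det * (!![c, d; d ^ q, c ^ q]).det * Hmat q M := by
    intro M
    simp only [Hmat, Matrix.mul_apply, Matrix.transpose_apply, Fin.sum_univ_two,
      Matrix.det_fin_two, Matrix.cons_val', Matrix.cons_val_zero, Matrix.cons_val_one,
      Matrix.head_cons, Matrix.empty_val', Matrix.cons_val_fin_one, Matrix.head_fin_const,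
      Matrix.cons_val_fin_one, Matrix.of_apply]
    simp only [pow_succ]
    simp only [hadd, mul_pow, hqq]
    ring
  refine ⟨hmain, fun h1 ξ M hM => ?_⟩
  rw [hmain M, h1, one_mul, hM, Matrix.det_mul, Matrix.det_mul, Matrix.det_transpose]
  have hdet : (!![a, b; b ^ q, a ^ q]).det * M.det * (!![c, d; d ^ q, c ^ q]).det =
      ((!![a, b; b ^ q, a ^ q]).det * (!![c, d; d ^ q, c ^ q]).det) * M.det := by ring
  rw [hdet, h1, one_mul]
end

section
/- Let ξ ∈ Z₁ and let u, w be two F-linearly independent Σ-vectors such that Q(su + tw) ≠ 0 for all (s,t) ∈ 𝔽_q² \ {(0,0)} (the extended Σ-line span_F{u,w} is external to Q₀). Then the number of one-dimensional F-subspaces ⟨v⟩ of F⁴ with v ∈ span_F{u, w} and H(v) = 2ξ·Q(v)^{(q+1)/2} is exactly q+1. -/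
/-
Let `σ x = x ^ q` and `v̄ = (σ δ, σ γ, σ β, σ α)` for `v = (α, β, γ, δ)`; the Σ-vectors are the
vectors with `v̄ = v`, and `H(v)` is the polar form of `Q` at `(v, v̄)`. On the plane `⟨u, w⟩` the
form `Q` has coefficients in `𝔽_q`, and since the line is external its discriminant is a nonsquare
of `𝔽_q`, hence a square `E²` in `F` with `σ E = -E`. So the extended line meets `Q` in two
conjugate points `⟨e⟩, ⟨ē⟩`, and `Q(X e + Y ē) = λ X Y`, `H(X e + Y ē) = λ (X^{q+1} + Y^{q+1})`
with `λ = H(e) ∈ 𝔽_q^*`. With `n = (q+1)/2` and `η = λ^{n-1} = ±1`, the equation of the surface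
becomes `x² + y² = 2ηξ x y` in `x = X^n`, `y = Y^n`, i.e. `x = ηξ(1 ± s) y` where
`1 - ξ⁻² = s²`. No solution has `Y = 0`, so the points are the `⟨t e + ē⟩` with
`t^n = ηξ(1 ± s)`; both right-hand sides are nonzero with square in `𝔽_q`, so each has exactly
`n` `n`-th roots in `F`, giving `2n = q + 1` points.
-/

open Submodule

theorem IsCyclic.exists_pow_eq_of_pow_eq_one {G : Type*} [Group G] [IsCyclic G] [Finite G]
    {n k : ℕ} (hG : Nat.card G = n * k) {z : G} (hz : z ^ k = 1) : ∃ t : G, t ^ n = z := by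
  obtain ⟨g, hg⟩ := IsCyclic.exists_generator (α := G)
  obtain ⟨i, rfl⟩ : z ∈ Submonoid.powers g := mem_powers_iff_mem_zpowers.mpr (hg z)
  have hk : 0 < k :=
    Nat.pos_of_ne_zero fun hk => (Nat.card_pos (α := G)).ne' (by rw [hG, hk, mul_zero])
  have hdvd : n * k ∣ i * k := by
    rw [← hG, ← orderOf_eq_card_of_forall_mem_zpowers hg]
    exact orderOf_dvd_of_pow_eq_one (by rwa [pow_mul])
  obtain ⟨j, rfl⟩ := (Nat.mul_dvd_mul_iff_right hk).mp hdvd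
  exact ⟨g ^ j, by rw [← pow_mul, mul_comm]⟩

namespace FiniteField

variable {F : Type*} [Field F] [Fintype F]

theorem exists_pow_eq_of_pow_eq_one {n k : ℕ} (hF : Fintype.card F - 1 = n * k) {z : F}
    (hz : z ^ k = 1) : ∃ t : F, t ^ n = z := by
  have hunits : Nat.card Fˣ = n * k := by
    rw [Nat.card_units, Nat.card_eq_fintype_card, hF]
  have hz0 : z ≠ 0 := by
    rintro rfl
    rw [zero_pow (right_ne_zero_of_mul (hunits ▸ Nat.card_pos.ne'))] at hz
    exact zero_ne_one hz
  obtain ⟨t, ht⟩ := IsCyclic.exists_pow_eq_of_pow_eq_one hunits (z := Units.mk0 z hz0)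
    (by ext; simp [hz])
  exact ⟨t, by simpa [Units.ext_iff] using ht⟩

open Polynomial in
theorem ncard_setOf_pow_eq {n k : ℕ} (hF : Fintype.card F - 1 = n * k) {z : F}
    (hz : z ^ k = 1) : {t : F | t ^ n = z}.ncard = n := by
  classical
  have hunits : Nat.card Fˣ = n * k := by
    rw [Nat.card_units, Nat.card_eq_fintype_card, hF]
  have hnk : 0 < n * k := hunits ▸ Nat.card_pos
  obtain ⟨g, hg⟩ := IsCyclic.exists_generator (α := Fˣ)
  have hζ : IsPrimitiveRoot ((g ^ k : Fˣ) : F) n := by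
    rw [IsPrimitiveRoot.coe_units_iff]
    have := IsPrimitiveRoot.orderOf g
    rw [orderOf_eq_card_of_forall_mem_zpowers hg, hunits] at this
    exact this.pow hnk (mul_comm n k)
  have hz0 : z ≠ 0 := by
    rintro rfl
    rw [zero_pow (Nat.pos_of_mul_pos_left hnk).ne'] at hz
    exact zero_ne_one hz
  have hset : {t : F | t ^ n = z} = ↑(nthRootsFinset n z) := by
    ext
    simp [mem_nthRootsFinset (Nat.pos_of_mul_pos_right hnk)]
  rw [hset, Set.ncard_coe_finset, nthRootsFinset_def,
    Multiset.toFinset_card_of_nodup (hζ.nthRoots_nodup hz0), hζ.card_nthRoots,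
    if_pos (exists_pow_eq_of_pow_eq_one hF hz)]

theorem ncard_setOf_pow_eq_or_pow_eq {n k : ℕ} (hF : Fintype.card F - 1 = n * k) {z₁ z₂ : F}
    (h₁ : z₁ ^ k = 1) (h₂ : z₂ ^ k = 1) (hne : z₁ ≠ z₂) :
    {t : F | t ^ n = z₁ ∨ t ^ n = z₂}.ncard = n + n := by
  have hdisj : Disjoint {t : F | t ^ n = z₁} {t | t ^ n = z₂} :=
    Set.disjoint_left.mpr fun t ht₁ ht₂ => hne (ht₁.symm.trans ht₂)
  rw [Set.ofPred_or, Set.ncard_union_eq hdisj, ncard_setOf_pow_eq hF h₁, ncard_setOf_pow_eq hF h₂]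

theorem exists_ringHom_pow_eq_of_card_eq_sq {q : ℕ} (hF : Fintype.card F = q ^ 2) :
    ∃ σ : F →+* F, (∀ x, x ^ q = σ x) ∧ ∀ x, σ (σ x) = x := by
  obtain ⟨n, hp, hn⟩ := FiniteField.card F (ringChar F)
  obtain ⟨j, -, rfl⟩ := (Nat.dvd_prime_pow hp).mp (hn ▸ hF ▸ dvd_pow_self q two_ne_zero)
  have : ExpChar F (ringChar F) := ExpChar.prime hp
  refine ⟨iterateFrobenius F (ringChar F) j, fun x => rfl, fun x => ?_⟩
  change (x ^ ringChar F ^ j) ^ ringChar F ^ j = x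
  rw [← pow_mul, ← sq, ← hF, FiniteField.pow_card]

end FiniteField

theorem Fline_eq_span_singleton {F : Type*} [Field F] (v : Fin 4 → F) :
    Fline v = (F ∙ v : Set (Fin 4 → F)) := by
  ext x
  simp [Fline, mem_span_singleton, eq_comm]

theorem ncard_Fline_span_pair {F : Type*} [Field F] {e₁ e₂ : Fin 4 → F}
    (he : LinearIndependent F ![e₁, e₂]) {P : (Fin 4 → F) → Prop}
    (hP : ∀ (r : F) (v : Fin 4 → F), r ≠ 0 → (P (r • v) ↔ P v))
    (hP₁ : ∀ x : F, x ≠ 0 → ¬ P (x • e₁)) :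
    {L | ∃ v, v ≠ 0 ∧ v ∈ span F {e₁, e₂} ∧ P v ∧ L = Fline v}.ncard =
      {t : F | P (t • e₁ + e₂)}.ncard := by
  have hinj : Set.InjOn (fun t : F => Fline (t • e₁ + e₂)) {t | P (t • e₁ + e₂)} := by
    intro t _ t' _ h
    simp only [Fline_eq_span_singleton, SetLike.coe_set_eq] at h
    obtain ⟨r, hr⟩ := span_singleton_eq_span_singleton.mp h
    rw [Units.smul_def, smul_add, smul_smul] at hr
    obtain ⟨ht, hr1⟩ := he.eq_of_pair (s' := t') (t' := 1) (by rw [hr, one_smul])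
    rw [hr1, one_mul] at ht
    exact ht
  rw [← hinj.ncard_image]
  congr 1
  ext L
  constructor
  · rintro ⟨v, hv0, hv, hPv, rfl⟩
    obtain ⟨a, b, rfl⟩ := mem_span_pair.mp hv
    have hb : b ≠ 0 := by
      rintro rfl
      rw [zero_smul, add_zero] at hv0 hPv
      exact hP₁ a (by rintro rfl; simp at hv0) hPv
    have hab : a • e₁ + b • e₂ = b • ((a / b) • e₁ + e₂) := by
      rw [smul_add, smul_smul, mul_div_cancel₀ _ hb]
    rw [hab] at hPv ⊢
    refine ⟨a / b, (hP b _ hb).mp hPv, ?_⟩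
    simp only [Fline_eq_span_singleton, span_singleton_smul_eq (IsUnit.mk0 b hb)]
  · rintro ⟨t, ht, rfl⟩
    refine ⟨t • e₁ + e₂, fun h0 => ?_, mem_span_pair.mpr ⟨t, 1, by rw [one_smul]⟩, ht, rfl⟩
    exact one_ne_zero (he.eq_zero_of_pair (s := t) (t := 1) (by rwa [one_smul])).2

theorem span_pair_smul_add_smul {K V : Type*} [Field K] [AddCommGroup V] [Module K V]
    (u w : V) {a b a' b' : K} (hdet : a * b' - a' * b ≠ 0) :
    span K {a • u + b • w, a' • u + b' • w} = span K {u, w} := by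
  apply le_antisymm
  · rw [span_le, Set.insert_subset_iff, Set.singleton_subset_iff]
    exact ⟨mem_span_pair.mpr ⟨a, b, rfl⟩, mem_span_pair.mpr ⟨a', b', rfl⟩⟩
  · have hu : (a * b' - a' * b) • u = b' • (a • u + b • w) - b • (a' • u + b' • w) := by
      module
    have hw : (a * b' - a' * b) • w = a • (a' • u + b' • w) - a' • (a • u + b • w) := by
      module
    have hmem : ∀ x ∈ ({u, w} : Set V), (a * b' - a' * b) • x ∈
        span K {a • u + b • w, a' • u + b' • w} := by
      rintro x (rfl | rfl) <;> [rw [hu]; rw [hw]] <;>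
        exact sub_mem (smul_mem _ _ (subset_span (by simp))) (smul_mem _ _ (subset_span (by simp)))
    rw [span_le]
    intro x hx
    rw [← inv_smul_smul₀ hdet x]
    exact smul_mem _ _ (hmem x hx)

theorem LinearIndependent.pair_smul_add_smul {K V : Type*} [Field K] [AddCommGroup V]
    [Module K V] {u w : V} (h : LinearIndependent K ![u, w]) {a b a' b' : K}
    (hdet : a * b' - a' * b ≠ 0) :
    LinearIndependent K ![a • u + b • w, a' • u + b' • w] := by
  rw [LinearIndependent.pair_iff] at h ⊢
  intro s t hst
  obtain ⟨h₁, h₂⟩ := h (s * a + t * a') (s * b + t * b') (by rw [← hst]; module)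
  refine ⟨?_, ?_⟩
  · apply (mul_eq_zero.mp _).resolve_right hdet
    linear_combination b' * h₁ - a' * h₂
  · apply (mul_eq_zero.mp _).resolve_right hdet
    linear_combination a * h₂ - b * h₁

section SigmaBar

open QuadraticMap

variable {F : Type*} [Field F] (σ : F →+* F)

def sigmaBar (v : Fin 4 → F) : Fin 4 → F := ![σ (v 3), σ (v 2), σ (v 1), σ (v 0)]

theorem sigmaBar_smul_add_smul (a b : F) (u w : Fin 4 → F) :
    sigmaBar σ (a • u + b • w) = σ a • sigmaBar σ u + σ b • sigmaBar σ w := by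
  ext i
  fin_cases i <;> simp [sigmaBar]

variable {σ} {q : ℕ}

theorem sigmaBar_eq_self (hσ : ∀ x, x ^ q = σ x) (hσ₂ : ∀ x, σ (σ x) = x) {u : Fin 4 → F}
    (hu : ∃ α β : F, u = ![α, β, β ^ q, α ^ q]) : sigmaBar σ u = u := by
  obtain ⟨α, β, rfl⟩ := hu
  ext i
  fin_cases i <;> simp [sigmaBar, hσ, hσ₂]

theorem Qf_sigmaBar (v : Fin 4 → F) : Qf (sigmaBar σ v) = σ (Qf v) := by
  simp only [Qf, sigmaBar, Fin.isValue, Matrix.cons_val_zero, Matrix.cons_val,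
    Matrix.cons_val_one, map_sub, map_mul]
  ring

theorem polar_Qf_sigmaBar (u w : Fin 4 → F) :
    polar Qf (sigmaBar σ u) (sigmaBar σ w) = σ (polar Qf u w) := by
  simp only [polar, Qf, sigmaBar, Fin.isValue, Pi.add_apply, Matrix.cons_val_zero,
    Matrix.cons_val, Matrix.cons_val_one, map_sub, map_mul, map_add]
  ring

theorem Qf_smul_add_smul (a b : F) (u w : Fin 4 → F) :
    Qf (a • u + b • w) = a ^ 2 * Qf u + a * b * polar Qf u w + b ^ 2 * Qf w := by
  simp only [Qf, polar, Pi.add_apply, Pi.smul_apply, smul_eq_mul]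
  ring

theorem Qf_smul (r : F) (v : Fin 4 → F) : Qf (r • v) = r ^ 2 * Qf v := by
  simp only [Qf, Pi.smul_apply, smul_eq_mul]
  ring

theorem Hf_smul (r : F) (v : Fin 4 → F) : Hf q (r • v) = r ^ (q + 1) * Hf q v := by
  simp only [Hf, Pi.smul_apply, smul_eq_mul, mul_pow]
  ring

theorem map_Hf (hσ : ∀ x, x ^ q = σ x) (hσ₂ : ∀ x, σ (σ x) = x) (v : Fin 4 → F) :
    σ (Hf q v) = Hf q v := by
  simp only [Hf, pow_succ, hσ, map_add, map_sub, map_mul, hσ₂]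
  ring

theorem Qf_smul_add_smul_sigmaBar (hσ : ∀ x, x ^ q = σ x) (X Y : F) (e : Fin 4 → F) :
    Qf (X • e + Y • sigmaBar σ e) = X ^ 2 * Qf e + X * Y * Hf q e + Y ^ 2 * σ (Qf e) := by
  simp only [Qf, Hf, sigmaBar, Fin.isValue, Matrix.smul_cons, smul_eq_mul, Matrix.smul_empty,
    Pi.add_apply, Pi.smul_apply, Matrix.cons_val_zero, Matrix.cons_val, Matrix.cons_val_one,
    pow_succ, pow_zero, one_mul, hσ, map_sub, map_mul]
  ring

theorem Hf_smul_add_smul_sigmaBar (hσ : ∀ x, x ^ q = σ x) (hσ₂ : ∀ x, σ (σ x) = x)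
    (X Y : F) (e : Fin 4 → F) :
    Hf q (X • e + Y • sigmaBar σ e) =
      (X * σ X + Y * σ Y) * Hf q e + 2 * (X * σ Y * Qf e + σ X * Y * σ (Qf e)) := by
  simp only [Hf, Qf, sigmaBar, Fin.isValue, Matrix.smul_cons, smul_eq_mul, Matrix.smul_empty,
    Pi.add_apply, Pi.smul_apply, Matrix.cons_val_zero, Matrix.cons_val_one, Matrix.cons_val,
    pow_succ, hσ, hσ₂, map_add, map_sub, map_mul]
  ring

end SigmaBar

section OddSquareOrder

open QuadraticMap

variable {F : Type*} [Field F] {σ : F →+* F} {m : ℕ}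

theorem pow_two_mul_eq_one_of_map_eq (hσ : ∀ x, x ^ (2 * m + 1) = σ x) {x : F} (hx0 : x ≠ 0)
    (hx : σ x = x) : x ^ (2 * m) = 1 :=
  mul_right_cancel₀ hx0 (by rw [← pow_succ, hσ, hx, one_mul])

theorem exists_sq_eq_discr_of_anisotropic [Fintype F] (hF : Fintype.card F = (2 * m + 1) ^ 2)
    (hσ : ∀ x, x ^ (2 * m + 1) = σ x) (h2 : (2 : F) ≠ 0) {c B c' : F} (hc : σ c = c)
    (hB : σ B = B) (hc' : σ c' = c')
    (hanis : ∀ a b : F, σ a = a → σ b = b → (a, b) ≠ (0, 0) →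
      a ^ 2 * c + a * b * B + b ^ 2 * c' ≠ 0) :
    c ≠ 0 ∧ ∃ E : F, E ≠ 0 ∧ E ^ 2 = B ^ 2 - 4 * c * c' ∧ σ E = -E := by
  have hc0 : c ≠ 0 := by simpa using hanis 1 0 (map_one σ) (map_zero σ) (by simp)
  have hD : ∀ z : F, σ z = z → z ^ 2 ≠ B ^ 2 - 4 * c * c' := by
    -- the form takes the value `c (z² - (B² - 4cc'))` at `(z - B, 2c)`
    intro z hz hzD
    refine hanis (z - B) (2 * c) (by rw [map_sub, hz, hB]) (by rw [map_mul, map_ofNat, hc])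
      (by simp [h2, hc0]) ?_
    linear_combination c * hzD
  have hD0 : B ^ 2 - 4 * c * c' ≠ 0 := fun h => hD 0 (map_zero σ) (by rw [h]; ring)
  have hDσ : σ (B ^ 2 - 4 * c * c') = B ^ 2 - 4 * c * c' := by
    simp only [map_sub, map_mul, map_pow, map_ofNat, hc, hB, hc']
  obtain ⟨E, hE⟩ := FiniteField.exists_pow_eq_of_pow_eq_one (n := 2) (k := 2 * m * (m + 1))
    (by rw [hF]; exact Nat.sub_eq_of_eq_add (by ring))
    (by rw [pow_mul, pow_two_mul_eq_one_of_map_eq hσ hD0 hDσ, one_pow])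
  refine ⟨hc0, E, fun h => hD0 (by rw [← hE, h, zero_pow two_ne_zero]), hE, ?_⟩
  have h : (σ E - E) * (σ E + E) = 0 := by
    linear_combination (by rw [← map_pow, hE, hDσ] : σ E ^ 2 = E ^ 2)
  rcases mul_eq_zero.mp h with h | h
  · exact absurd hE (hD E (sub_eq_zero.mp h))
  · exact eq_neg_of_add_eq_zero_left h

theorem exists_isotropic_frame [Fintype F] (hF : Fintype.card F = (2 * m + 1) ^ 2)
    (hσ : ∀ x, x ^ (2 * m + 1) = σ x) (hσ₂ : ∀ x, σ (σ x) = x) (h2 : (2 : F) ≠ 0)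
    {u w : Fin 4 → F} (hu : ∃ α β : F, u = ![α, β, β ^ (2 * m + 1), α ^ (2 * m + 1)])
    (hw : ∃ α β : F, w = ![α, β, β ^ (2 * m + 1), α ^ (2 * m + 1)])
    (hind : LinearIndependent F ![u, w])
    (hext : ∀ s t : F, s ^ (2 * m + 1) = s → t ^ (2 * m + 1) = t → (s, t) ≠ (0, 0) →
      Qf (fun i => s * u i + t * w i) ≠ 0) :
    ∃ e : Fin 4 → F, span F {e, sigmaBar σ e} = span F {u, w} ∧
      LinearIndependent F ![e, sigmaBar σ e] ∧ Qf e = 0 ∧ Hf (2 * m + 1) e ≠ 0 := by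
  have hu_fix := sigmaBar_eq_self hσ hσ₂ hu
  have hw_fix := sigmaBar_eq_self hσ hσ₂ hw
  have hc : σ (Qf u) = Qf u := by rw [← Qf_sigmaBar, hu_fix]
  have hc' : σ (Qf w) = Qf w := by rw [← Qf_sigmaBar, hw_fix]
  have hB : σ (polar Qf u w) = polar Qf u w := by rw [← polar_Qf_sigmaBar, hu_fix, hw_fix]
  obtain ⟨hc0, E, hE0, hE, hσE⟩ := exists_sq_eq_discr_of_anisotropic hF hσ h2 hc hB hc'
    fun a b ha hb hab => by
      rw [← Qf_smul_add_smul]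
      exact hext a b (by rw [hσ, ha]) (by rw [hσ, hb]) hab
  set c := Qf u
  set B := polar Qf u w
  set e := (E - B) • u + (2 * c) • w with he
  have hē : sigmaBar σ e = (-E - B) • u + (2 * c) • w := by
    rw [he, sigmaBar_smul_add_smul, hu_fix, hw_fix, map_sub, map_mul, map_ofNat, hσE, hB, hc]
  have hdet : (E - B) * (2 * c) - (-E - B) * (2 * c) ≠ 0 := by
    rw [show (E - B) * (2 * c) - (-E - B) * (2 * c) = 2 * 2 * c * E by ring]
    exact mul_ne_zero (mul_ne_zero (mul_ne_zero h2 h2) hc0) hE0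
  have hQe : Qf e = 0 := by
    rw [Qf_smul_add_smul]
    linear_combination c * hE
  refine ⟨e, hē ▸ span_pair_smul_add_smul u w hdet, hē ▸ hind.pair_smul_add_smul hdet, hQe, ?_⟩
  -- `Q(e - ē) = -H(e)` because `e` is isotropic, while `e - ē = 2E u` and `Q(u) ≠ 0`
  intro hH
  have hdiff : (1 : F) • e + (-1 : F) • sigmaBar σ e = (2 * E) • u := by
    rw [hē, he]
    module
  have h := Qf_smul_add_smul_sigmaBar hσ 1 (-1) e
  rw [hdiff, hQe, hH, Qf_smul, map_zero] at h
  exact mul_ne_zero (pow_ne_zero 2 (mul_ne_zero h2 hE0)) hc0 (by linear_combination h)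

theorem surface_smul_iff {r : F} (hr : r ≠ 0) (ξ : F) (v : Fin 4 → F) :
    Hf (2 * m + 1) (r • v) = 2 * ξ * Qf (r • v) ^ (m + 1) ↔
      Hf (2 * m + 1) v = 2 * ξ * Qf v ^ (m + 1) := by
  have hQ : Qf (r • v) ^ (m + 1) = r ^ (2 * m + 1 + 1) * Qf v ^ (m + 1) := by
    rw [Qf_smul, mul_pow, ← pow_mul]
    ring_nf
  rw [Hf_smul, hQ]
  constructor
  · intro h
    exact mul_left_cancel₀ (pow_ne_zero (2 * m + 1 + 1) hr) (by linear_combination h)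
  · intro h
    linear_combination r ^ (2 * m + 1 + 1) * h

theorem surface_frame_iff (hσ : ∀ x, x ^ (2 * m + 1) = σ x) (hσ₂ : ∀ x, σ (σ x) = x)
    {e : Fin 4 → F} (hQe : Qf e = 0) (hHe : Hf (2 * m + 1) e ≠ 0) (ξ X Y : F) :
    Hf (2 * m + 1) (X • e + Y • sigmaBar σ e) =
        2 * ξ * Qf (X • e + Y • sigmaBar σ e) ^ (m + 1) ↔
      (X ^ (m + 1)) ^ 2 + (Y ^ (m + 1)) ^ 2 =
        2 * (Hf (2 * m + 1) e ^ m * ξ) * (X ^ (m + 1) * Y ^ (m + 1)) := by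
  have hN : ∀ Z : F, Z * σ Z = (Z ^ (m + 1)) ^ 2 := fun Z => by
    rw [← hσ, ← pow_succ', ← pow_mul]
    ring_nf
  rw [Hf_smul_add_smul_sigmaBar hσ hσ₂, Qf_smul_add_smul_sigmaBar hσ, hQe, map_zero, hN, hN]
  constructor
  · intro h
    exact mul_left_cancel₀ hHe (by linear_combination h)
  · intro h
    linear_combination Hf (2 * m + 1) e * h

theorem sq_add_sq_eq_iff {η ξ s x y : F} (hη : η ^ 2 = 1) (hξs : ξ ^ 2 * (1 - s ^ 2) = 1) :
    x ^ 2 + y ^ 2 = 2 * (η * ξ) * (x * y) ↔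
      x = η * ξ * (1 + s) * y ∨ x = η * ξ * (1 - s) * y := by
  rw [← sub_eq_zero (a := x), ← sub_eq_zero (a := x), ← mul_eq_zero]
  constructor
  · intro h
    linear_combination h + y ^ 2 * hη + η ^ 2 * y ^ 2 * hξs
  · intro h
    linear_combination h - y ^ 2 * hη - η ^ 2 * y ^ 2 * hξs

theorem ncard_pow_succ_eq_or [Fintype F] (hF : Fintype.card F = (2 * m + 1) ^ 2)
    (hσ : ∀ x, x ^ (2 * m + 1) = σ x) (h2 : (2 : F) ≠ 0) {η ξ s : F} (hη : η ^ 2 = 1)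
    (hησ : σ η = η) (hsσ : σ s = s) (hs0 : s ≠ 0) (hξs : ξ ^ 2 * (1 - s ^ 2) = 1) :
    {t : F | t ^ (m + 1) = η * ξ * (1 + s) ∨ t ^ (m + 1) = η * ξ * (1 - s)}.ncard =
      2 * m + 1 + 1 := by
  have hξσ : σ (ξ ^ 2) = ξ ^ 2 := by
    rw [eq_inv_of_mul_eq_one_left hξs, map_inv₀, map_sub, map_one, map_pow, hsσ]
  have hprod : η * ξ * (1 + s) * (η * ξ * (1 - s)) = 1 := by
    linear_combination (ξ ^ 2 * (1 - s ^ 2)) * hη + hξs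
  have hroot : ∀ ε : F, σ ε = ε → η * ξ * ε ≠ 0 → (η * ξ * ε) ^ (4 * m) = 1 := by
    intro ε hε hr
    have hr2 : σ ((η * ξ * ε) ^ 2) = (η * ξ * ε) ^ 2 := by
      rw [mul_pow, mul_pow, map_mul, map_mul, hξσ, map_pow, map_pow, hησ, hε]
    rw [show 4 * m = 2 * (2 * m) by ring, pow_mul,
      pow_two_mul_eq_one_of_map_eq hσ (pow_ne_zero 2 hr) hr2]
  rw [FiniteField.ncard_setOf_pow_eq_or_pow_eq (k := 4 * m)
    (by rw [hF]; exact Nat.sub_eq_of_eq_add (by ring))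
    (hroot _ (by rw [map_add, map_one, hsσ]) (left_ne_zero_of_mul_eq_one hprod))
    (hroot _ (by rw [map_sub, map_one, hsσ]) (right_ne_zero_of_mul_eq_one hprod)) ?_]
  · ring
  · intro h
    have h' : η * ξ * (2 * s) = 0 := by linear_combination h
    rcases mul_eq_zero.mp h' with h' | h'
    · simp [h'] at hprod
    · exact mul_ne_zero h2 hs0 h'

end OddSquareOrder

theorem stmt14_general (q : ℕ) (hodd : Odd q)
    (F : Type*) [Field F] [Fintype F] (hF : Fintype.card F = q ^ 2)
    (ξ : F) (hξ : ξ ∈ Zone q F)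
    (u w : Fin 4 → F) (hu : IsSigmaVec q u) (hw : IsSigmaVec q w)
    (hind : LinearIndependent F ![u, w])
    (hext : ∀ s t : F, s ^ q = s → t ^ q = t → (s, t) ≠ (0, 0) →
      Qf (fun i => s * u i + t * w i) ≠ 0) :
    Set.ncard {L : Set (Fin 4 → F) | ∃ v : Fin 4 → F, v ≠ 0 ∧
      v ∈ Submodule.span F {u, w} ∧
      Hf q v = 2 * ξ * Qf v ^ ((q + 1) / 2) ∧ L = Fline v} = q + 1 := by
  obtain ⟨m, rfl⟩ := hodd
  obtain ⟨σ, hσ, hσ₂⟩ := FiniteField.exists_ringHom_pow_eq_of_card_eq_sq hF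
  have h2 : (2 : F) ≠ 0 := Ring.two_ne_zero fun h => by
    have := FiniteField.even_card_iff_char_two.mp h
    rw [hF, Nat.pow_mod, Nat.add_mod] at this
    simp at this
  obtain ⟨e, hspan, he, hQe, hHe⟩ := exists_isotropic_frame hF hσ hσ₂ h2 hu.2 hw.2 hind hext
  obtain ⟨hξ0, -, -, s, hs, hs0, hξs⟩ := hξ
  have hξs' : ξ ^ 2 * (1 - s ^ 2) = 1 := by
    rw [show 1 - s ^ 2 = (ξ ^ 2)⁻¹ by linear_combination hξs, mul_inv_cancel₀ (pow_ne_zero 2 hξ0)]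
  have hη : (Hf (2 * m + 1) e ^ m) ^ 2 = 1 := by
    rw [← pow_mul, mul_comm m 2, pow_two_mul_eq_one_of_map_eq hσ hHe (map_Hf hσ hσ₂ e)]
  rw [show (2 * m + 1 + 1) / 2 = m + 1 by omega, ← hspan]
  refine (ncard_Fline_span_pair he (fun r v hr => surface_smul_iff hr ξ v)
    fun x hx h => ?_).trans ?_
  · rw [← add_zero (x • e), ← zero_smul F (sigmaBar σ e), surface_frame_iff hσ hσ₂ hQe hHe] at h
    exact hx (by simpa using h)
  · rw [← ncard_pow_succ_eq_or hF hσ h2 hη (by rw [map_pow, map_Hf hσ hσ₂]) (by rw [← hσ, hs])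
      hs0 hξs']
    congr 1
    ext t
    rw [Set.mem_ofPred_eq, ← one_smul F (sigmaBar σ e), surface_frame_iff hσ hσ₂ hQe hHe,
      sq_add_sq_eq_iff hη hξs', one_pow, mul_one, mul_one]
    rfl

/-- An extended `Σ`-line external to `Q₀` meets the surface `S_ξ`, `ξ ∈ Z₁`, in exactly
`q+1` points. -/
theorem stmt14 (q : ℕ) (hq : ∃ p k : ℕ, p.Prime ∧ 0 < k ∧ q = p ^ k) (hodd : Odd q)
    (F : Type*) [Field F] [Fintype F] (hF : Fintype.card F = q ^ 2)
    (ξ : F) (hξ : ξ ∈ Zone q F)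
    (u w : Fin 4 → F) (hu : IsSigmaVec q u) (hw : IsSigmaVec q w)
    (hind : LinearIndependent F ![u, w])
    (hext : ∀ s t : F, s ^ q = s → t ^ q = t → (s, t) ≠ (0, 0) →
      Qf (fun i => s * u i + t * w i) ≠ 0) :
    Set.ncard {L : Set (Fin 4 → F) | ∃ v : Fin 4 → F, v ≠ 0 ∧
      v ∈ Submodule.span F {u, w} ∧
      Hf q v = 2 * ξ * Qf v ^ ((q + 1) / 2) ∧ L = Fline v} = q + 1 :=
  stmt14_general q hodd F hF ξ hξ u w hu hw hind hext
end

section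
/- Let ξ ∈ F, let p be a Σ-vector with Q(p) = 0, and let r ∈ F⁴ satisfy H(r) = 2ξ·Q(r)^{(q+1)/2} and h(r, p) = 0. Then H(p + λr) = 2ξ·Q(p + λr)^{(q+1)/2} for every λ ∈ F. (If P ∈ Q₀ and R lies on the surface S_ξ and on the tangent plane P^⊥, then the whole line PR is contained in S_ξ.) -/
/-- If `P ∈ Q₀` and `R ∈ S_ξ ∩ P^⊥`, then the whole line `PR` is contained in `S_ξ`. -/
theorem stmt16 (q : ℕ) (hq : ∃ p k : ℕ, p.Prime ∧ 0 < k ∧ q = p ^ k) (hodd : Odd q)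
    (F : Type*) [Field F] [Fintype F] (hF : Fintype.card F = q ^ 2)
    (ξ : F) (p r : Fin 4 → F)
    (hp : IsSigmaVec q p) (hQp : Qf p = 0)
    (hr : Hf q r = 2 * ξ * Qf r ^ ((q + 1) / 2))
    (hperp : hForm q r p = 0) :
    ∀ lam : F, Hf q (p + lam • r) = 2 * ξ * Qf (p + lam • r) ^ ((q + 1) / 2) := by
  intro lam
  obtain ⟨_, α, β, rfl⟩ := hp
  -- x^(q^2) = x, as (x^q)^q = x
  have hq2 : ∀ x : F, (x ^ q) ^ q = x := by
    intro x
    rw [← pow_mul, ← sq, ← hF, FiniteField.pow_card]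
  -- Frobenius additivity
  have hadd : ∀ x y : F, (x + y) ^ q = x ^ q + y ^ q := by
    obtain ⟨p0, k, hp0, hk, rfl⟩ := hq
    haveI : Fact p0.Prime := ⟨hp0⟩
    haveI : CharP F (ringChar F) := ringChar.charP F
    obtain ⟨n, hnp, hcard⟩ := FiniteField.card F (ringChar F)
    have hdvd : ringChar F ∣ p0 := by
      refine hnp.dvd_of_dvd_pow (n := k * 2) ?_
      have : ringChar F ∣ ringChar F ^ (n : ℕ) := dvd_pow_self _ n.pos.ne'
      rw [← hcard, hF, ← pow_mul] at this
      exact this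
    have heq : ringChar F = p0 := (Nat.prime_dvd_prime_iff_eq hnp hp0).mp hdvd
    haveI : Fact (ringChar F).Prime := ⟨hnp⟩
    intro x y
    rw [← heq]
    exact add_pow_char_pow x y (ringChar F) k
  have hq0 : q ≠ 0 := by rintro rfl; exact (Nat.not_odd_iff_even.2 Even.zero) hodd
  have hadd4 : ∀ a b c d : F, (a - b - c + d) ^ q = a ^ q - b ^ q - c ^ q + d ^ q := by
    intro a b c d
    rw [show a - b - c + d = a + -b + -c + d by ring, hadd, hadd, hadd,
      Odd.neg_pow hodd, Odd.neg_pow hodd]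
    ring
  -- unfold hypotheses
  have hQp' : α * α ^ q - β * β ^ q = 0 := by simpa [Qf] using hQp
  have hperp' : r 0 * α ^ q - r 1 * β ^ q - r 2 * β + r 3 * α = 0 := by
    have := hperp
    simp only [hForm, Matrix.cons_val_zero, Matrix.cons_val_one, Matrix.head_cons,
      Matrix.cons_val_two, Matrix.tail_cons, Matrix.cons_val_three, hq2] at this
    exact this
  have hA : α * r 0 ^ q - β * r 1 ^ q - β ^ q * r 2 ^ q + α ^ q * r 3 ^ q = 0 := by
    have h := congrArg (· ^ q) hperp'
    simp only [hadd4, mul_pow, hq2, zero_pow hq0] at h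
    linear_combination h
  have e2 : (q + 1) / 2 * 2 = q + 1 := by obtain ⟨m, hm⟩ := hodd; omega
  have hQ : Qf (![α, β, β ^ q, α ^ q] + lam • r) = lam ^ 2 * Qf r := by
    simp only [Qf, Pi.add_apply, Pi.smul_apply, smul_eq_mul, Matrix.cons_val_zero,
      Matrix.cons_val_one, Matrix.head_cons, Matrix.cons_val_two, Matrix.tail_cons,
      Matrix.cons_val_three]
    linear_combination hQp' + lam * hperp'
  have hexp : ∀ x y : F, (x + lam * y) ^ (q + 1)
      = (x ^ q + lam ^ q * y ^ q) * (x + lam * y) := by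
    intro x y
    rw [pow_succ, hadd, mul_pow]
  have key : Hf q (![α, β, β ^ q, α ^ q] + lam • r) = lam ^ (q + 1) * Hf q r := by
    simp only [Hf, Pi.add_apply, Pi.smul_apply, smul_eq_mul, Matrix.cons_val_zero,
      Matrix.cons_val_one, Matrix.head_cons, Matrix.cons_val_two, Matrix.tail_cons,
      Matrix.cons_val_three, hexp]
    simp only [pow_succ, hq2]
    linear_combination 2 * hQp' + lam ^ q * hA + lam * hperp'
  rw [key, hr, hQ, mul_pow, ← pow_mul, mul_comm 2 ((q+1)/2), e2]
  ring
end

section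
/- Let ξ ∈ Z₂ and let v ∈ F⁴ satisfy H(v) = 2ξ·Q(v)^{(q+1)/2} and H(v) ≠ 0. Then there are exactly two one-dimensional F-subspaces of F⁴ that are spanned by a Σ-vector r with Q(r) = 0 and h(v, r) = 0. (Every point of a surface in the family S̃² lies on precisely two extended tangent planes of the subquadric Q₀.) -/
open Function

section Involution

variable {F : Type*} [Field F] (σ : F →+* F)

def sigmaVec (α β : F) : Fin 4 → F := ![α, β, σ β, σ α]

def herm (u w : Fin 4 → F) : F :=
  u 0 * σ (w 0) - u 1 * σ (w 1) - u 2 * σ (w 2) + u 3 * σ (w 3)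

def tangentLines (v : Fin 4 → F) : Set (Set (Fin 4 → F)) :=
  {L | ∃ α β : F, sigmaVec σ α β ≠ 0 ∧ Qf (sigmaVec σ α β) = 0 ∧
    herm σ v (sigmaVec σ α β) = 0 ∧ L = Fline (sigmaVec σ α β)}

def slopeA (v : Fin 4 → F) : F := v 0 * σ (v 1) - v 2 * σ (v 3)

def slopeC (v : Fin 4 → F) : F :=
  v 3 * σ (v 3) + v 2 * σ (v 2) - v 0 * σ (v 0) - v 1 * σ (v 1)

def slopePoly (v : Fin 4 → F) (x : F) : F :=
  slopeA σ v * (x * x) + slopeC σ v * x + σ (slopeA σ v)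

variable {σ}

lemma Fline_smul {e : F} (he : e ≠ 0) (w : Fin 4 → F) : Fline (e • w) = Fline w := by
  ext x
  constructor
  · rintro ⟨a, rfl⟩
    exact ⟨a * e, by rw [mul_smul]⟩
  · rintro ⟨a, rfl⟩
    exact ⟨a * e⁻¹, by rw [smul_smul, mul_assoc, inv_mul_cancel₀ he, mul_one]⟩

lemma sigmaVec_mul_mul {e : F} (he : σ e = e) (α β : F) :
    sigmaVec σ (e * α) (e * β) = e • sigmaVec σ α β := by
  ext i
  fin_cases i <;> simp [sigmaVec, he]

lemma Qf_sigmaVec (α β : F) : Qf (sigmaVec σ α β) = α * σ α - β * σ β := by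
  simp [Qf, sigmaVec]

lemma map_herm_self (hσ : Involutive σ) (v : Fin 4 → F) : σ (herm σ v v) = herm σ v v := by
  simp [herm, hσ _]
  ring

lemma map_slopeC (hσ : Involutive σ) (v : Fin 4 → F) : σ (slopeC σ v) = slopeC σ v := by
  simp [slopeC, hσ _]
  ring

lemma discrim_slope (hσ : Involutive σ) (v : Fin 4 → F) :
    discrim (slopeA σ v) (slopeC σ v) (σ (slopeA σ v)) =
      herm σ v v ^ 2 - 4 * Qf v * σ (Qf v) := by
  simp [discrim, slopeA, slopeC, herm, Qf, hσ _]
  ring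

lemma herm_sigmaVec_mul (hσ : Involutive σ) (v : Fin 4 → F) (α l : F) :
    herm σ v (sigmaVec σ α (l * α)) = (v 3 - v 2 * l) * α + (v 0 - v 1 * σ l) * σ α := by
  simp [herm, sigmaVec, hσ _]
  ring

lemma mul_map_eq_of_add_map_eq_zero (hσ : Involutive σ) {a b α : F} (hα : α ≠ 0)
    (h : a * α + b * σ α = 0) : a * σ a = b * σ b := by
  have h' : σ a * σ α + σ b * α = 0 := by simpa [hσ α] using congrArg σ h
  have hα' : α * σ α ≠ 0 := by simp [hα]
  apply mul_right_cancel₀ hα'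
  linear_combination σ a * σ α * h - b * σ α * h'

/-- An explicit Hilbert 90 for the quadratic extension `F / Fix σ`. -/
lemma exists_ne_zero_add_map_eq_zero (hσ : Involutive σ) {c : F} (hc : σ c ≠ c) {a b : F}
    (ha : a ≠ 0) (hab : a * σ a = b * σ b) : ∃ α ≠ 0, a * α + b * σ α = 0 := by
  by_cases hb : σ a = b
  · refine ⟨(c - σ c) / a, div_ne_zero (sub_ne_zero.mpr hc.symm) ha, ?_⟩
    have ha' : σ a ≠ 0 := by simpa
    rw [← hb, map_div₀, map_sub, hσ c]
    field_simp
    ring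
  · refine ⟨σ a - b, sub_ne_zero.mpr hb, ?_⟩
    rw [map_sub, hσ a]
    linear_combination hab

lemma map_div_eq_of_add_map_eq_zero {a b α α' : F} (hb : b ≠ 0) (hα : α ≠ 0)
    (h : a * α + b * σ α = 0) (h' : a * α' + b * σ α' = 0) : σ (α' / α) = α' / α := by
  have hα' : σ α ≠ 0 := by simpa
  have hcross : σ α' * α = α' * σ α :=
    mul_left_cancel₀ hb (by linear_combination α * h' - α' * h)
  rw [map_div₀, div_eq_div_iff hα' hα, hcross]

lemma mem_tangentLines_iff {v : Fin 4 → F} {L : Set (Fin 4 → F)} :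
    L ∈ tangentLines σ v ↔ ∃ l α : F, l * σ l = 1 ∧ α ≠ 0 ∧
      herm σ v (sigmaVec σ α (l * α)) = 0 ∧ L = Fline (sigmaVec σ α (l * α)) := by
  constructor
  · rintro ⟨α, β, hne, hQ, hherm, rfl⟩
    rw [Qf_sigmaVec, sub_eq_zero] at hQ
    have hα : α ≠ 0 := by
      rintro rfl
      have hβ : β = 0 := by simpa using hQ.symm
      exact hne (by ext i; fin_cases i <;> simp [sigmaVec, hβ])
    refine ⟨β / α, α, ?_, hα, ?_⟩
    · rw [map_div₀, div_mul_div_comm, ← hQ, div_self (by simpa)]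
    · rw [div_mul_cancel₀ β hα]
      exact ⟨hherm, rfl⟩
  · rintro ⟨l, α, hl, hα, hherm, rfl⟩
    refine ⟨α, l * α, fun h => hα (by simpa [sigmaVec] using congrFun h 0), ?_, hherm, rfl⟩
    rw [Qf_sigmaVec, map_mul]
    linear_combination -(α * σ α) * hl

lemma herm_self_eq_zero_of_slope (hσ : Involutive σ) {v : Fin 4 → F} {l : F} (hl : l * σ l = 1)
    (h3 : v 3 = v 2 * l) (h0 : v 0 = v 1 * σ l) : herm σ v v = 0 := by
  simp only [herm, h3, h0, map_mul, hσ l]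
  linear_combination (v 1 * σ (v 1) + v 2 * σ (v 2)) * hl

lemma mul_map_sub_mul_map_eq (hσ : Involutive σ) (v : Fin 4 → F) {l : F} (hl : l * σ l = 1) :
    (v 3 - v 2 * l) * σ (v 3 - v 2 * l) - (v 0 - v 1 * σ l) * σ (v 0 - v 1 * σ l) =
      σ l * slopePoly σ v l := by
  simp only [slopePoly, slopeA, slopeC, map_sub, map_mul, hσ _]
  linear_combination
    -(v 3 * σ (v 3) - v 0 * σ (v 0) + (v 0 * σ (v 1) - v 2 * σ (v 3)) * l) * hl

section Slope

variable {v : Fin 4 → F} {l : F}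

lemma slope_root_of_herm_eq_zero (hσ : Involutive σ) (hl : l * σ l = 1) {α : F} (hα : α ≠ 0)
    (h : herm σ v (sigmaVec σ α (l * α)) = 0) : slopePoly σ v l = 0 := by
  rw [herm_sigmaVec_mul hσ] at h
  have hnorm := mul_map_eq_of_add_map_eq_zero hσ hα h
  rw [← sub_eq_zero, mul_map_sub_mul_map_eq hσ v hl] at hnorm
  exact (mul_eq_zero.mp hnorm).resolve_left (right_ne_zero_of_mul_eq_one hl)

lemma mul_map_eq_mul_map_of_slope_root (hσ : Involutive σ) (hl : l * σ l = 1)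
    (hP : slopePoly σ v l = 0) :
    (v 3 - v 2 * l) * σ (v 3 - v 2 * l) = (v 0 - v 1 * σ l) * σ (v 0 - v 1 * σ l) := by
  rw [← sub_eq_zero, mul_map_sub_mul_map_eq hσ v hl, hP, mul_zero]

lemma slope_coeffs_ne_zero (hσ : Involutive σ) (hl : l * σ l = 1) (hH : herm σ v v ≠ 0)
    (hP : slopePoly σ v l = 0) : v 3 - v 2 * l ≠ 0 ∧ v 0 - v 1 * σ l ≠ 0 := by
  have hnorm := mul_map_eq_mul_map_of_slope_root hσ hl hP
  have hboth : v 3 - v 2 * l = 0 → v 0 - v 1 * σ l = 0 → False := fun h3 h0 =>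
    hH (herm_self_eq_zero_of_slope hσ hl (sub_eq_zero.mp h3) (sub_eq_zero.mp h0))
  constructor
  · intro h3
    rw [h3, zero_mul, eq_comm, mul_eq_zero, map_eq_zero, or_self] at hnorm
    exact hboth h3 hnorm
  · intro h0
    rw [h0, zero_mul, mul_eq_zero, map_eq_zero, or_self] at hnorm
    exact hboth hnorm h0

lemma exists_herm_sigmaVec_eq_zero (hσ : Involutive σ) (hl : l * σ l = 1)
    (hH : herm σ v v ≠ 0) (hP : slopePoly σ v l = 0) {c : F} (hc : σ c ≠ c) :
    ∃ α ≠ 0, herm σ v (sigmaVec σ α (l * α)) = 0 := by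
  simp only [herm_sigmaVec_mul hσ]
  exact exists_ne_zero_add_map_eq_zero hσ hc (slope_coeffs_ne_zero hσ hl hH hP).1
    (mul_map_eq_mul_map_of_slope_root hσ hl hP)

lemma Fline_sigmaVec_eq_of_herm_eq_zero (hσ : Involutive σ) (hl : l * σ l = 1)
    (hH : herm σ v v ≠ 0) (hP : slopePoly σ v l = 0) {α α' : F} (hα : α ≠ 0) (hα' : α' ≠ 0)
    (h : herm σ v (sigmaVec σ α (l * α)) = 0) (h' : herm σ v (sigmaVec σ α' (l * α')) = 0) :
    Fline (sigmaVec σ α' (l * α')) = Fline (sigmaVec σ α (l * α)) := by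
  rw [herm_sigmaVec_mul hσ] at h h'
  have he := map_div_eq_of_add_map_eq_zero (slope_coeffs_ne_zero hσ hl hH hP).2 hα h h'
  have hα'_eq : α' = α' / α * α := (div_mul_cancel₀ α' hα).symm
  rw [hα'_eq, mul_left_comm, sigmaVec_mul_mul he, Fline_smul (div_ne_zero hα' hα)]

lemma eq_of_Fline_sigmaVec_eq {l' α α' : F} (hα' : α' ≠ 0)
    (h : Fline (sigmaVec σ α (l * α)) = Fline (sigmaVec σ α' (l' * α'))) : l = l' := by
  have hmem : sigmaVec σ α' (l' * α') ∈ Fline (sigmaVec σ α (l * α)) :=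
    h ▸ ⟨1, (one_smul F _).symm⟩
  obtain ⟨c, hc⟩ := hmem
  have h0 : α' = c * α := by simpa [sigmaVec] using congrFun hc 0
  have h1 : l' * α' = c * (l * α) := by simpa [sigmaVec] using congrFun hc 1
  exact mul_right_cancel₀ hα' (by linear_combination l * h0 - h1)

end Slope

lemma exists_mul_self_eq_map_neg {Δ : F} (hΔ : σ Δ = Δ) (hsq : IsSquare Δ)
    (hns : ¬∃ s, σ s = s ∧ Δ = s ^ 2) : ∃ d ≠ 0, Δ = d * d ∧ σ d = -d := by
  obtain ⟨d, hd⟩ := hsq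
  have hd0 : d ≠ 0 := fun h => hns ⟨0, map_zero σ, by simp [hd, h]⟩
  have hσd : σ d * σ d = d * d := by rw [← map_mul, ← hd, hΔ]
  refine ⟨d, hd0, hd, (mul_self_eq_mul_self_iff.mp hσd).resolve_left fun h => ?_⟩
  exact hns ⟨d, h, by rw [hd, sq]⟩

lemma mul_map_eq_one_of_root [NeZero (2 : F)] {A C d : F} (hA : A ≠ 0)
    (hC : σ C = C) (hd : discrim A C (σ A) = d * d) (hσd : σ d = -d) {x : F}
    (hx : A * (x * x) + C * x + σ A = 0) : x * σ x = 1 := by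
  have hA' : σ A ≠ 0 := by simpa
  rcases (quadratic_eq_zero_iff hA hd x).mp hx with rfl | rfl <;>
  · rw [discrim] at hd
    simp only [map_div₀, map_add, map_sub, map_neg, map_mul, map_ofNat, hC, hσd]
    field_simp
    linear_combination hd

lemma ncard_tangentLines_eq_two_of_roots (hσ : Involutive σ) {v : Fin 4 → F}
    (hH : herm σ v v ≠ 0) {c : F} (hc : σ c ≠ c) {l₁ l₂ : F} (h₁₂ : l₁ ≠ l₂)
    (hroot : ∀ x, slopePoly σ v x = 0 ↔ x = l₁ ∨ x = l₂)
    (hnorm : ∀ {x}, slopePoly σ v x = 0 → x * σ x = 1) :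
    (tangentLines σ v).ncard = 2 := by
  have hP₁ := (hroot l₁).mpr (Or.inl rfl)
  have hP₂ := (hroot l₂).mpr (Or.inr rfl)
  obtain ⟨α₁, hα₁, h₁⟩ := exists_herm_sigmaVec_eq_zero hσ (hnorm hP₁) hH hP₁ hc
  obtain ⟨α₂, hα₂, h₂⟩ := exists_herm_sigmaVec_eq_zero hσ (hnorm hP₂) hH hP₂ hc
  have hlines : tangentLines σ v =
      {Fline (sigmaVec σ α₁ (l₁ * α₁)), Fline (sigmaVec σ α₂ (l₂ * α₂))} := by
    ext L
    rw [mem_tangentLines_iff]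
    constructor
    · rintro ⟨l, α, hl, hα, h, rfl⟩
      have hP := slope_root_of_herm_eq_zero hσ hl hα h
      rcases (hroot l).mp hP with rfl | rfl
      · exact Or.inl (Fline_sigmaVec_eq_of_herm_eq_zero hσ hl hH hP hα₁ hα h₁ h)
      · exact Or.inr (Fline_sigmaVec_eq_of_herm_eq_zero hσ hl hH hP hα₂ hα h₂ h)
    · rintro (rfl | rfl)
      exacts [⟨l₁, α₁, hnorm hP₁, hα₁, h₁, rfl⟩,
        ⟨l₂, α₂, hnorm hP₂, hα₂, h₂, rfl⟩]
  rw [hlines, Set.ncard_pair]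
  exact fun h => h₁₂ (eq_of_Fline_sigmaVec_eq hα₂ h)

theorem ncard_tangentLines_eq_two [NeZero (2 : F)] (hσ : Involutive σ) {v : Fin 4 → F}
    (hH : herm σ v v ≠ 0) (hsq : IsSquare (herm σ v v ^ 2 - 4 * Qf v * σ (Qf v)))
    (hns : ¬∃ s, σ s = s ∧ herm σ v v ^ 2 - 4 * Qf v * σ (Qf v) = s ^ 2) :
    (tangentLines σ v).ncard = 2 := by
  rw [← discrim_slope hσ] at hsq hns
  set A := slopeA σ v
  set C := slopeC σ v
  have hC : σ C = C := map_slopeC hσ v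
  have hA : A ≠ 0 := fun h => hns ⟨C, hC, by simp [discrim, h]⟩
  have hΔ : σ (discrim A C (σ A)) = discrim A C (σ A) := by
    simp only [discrim, map_sub, map_mul, map_pow, map_ofNat, hC, hσ A]
    ring
  obtain ⟨d, hd0, hd, hσd⟩ := exists_mul_self_eq_map_neg hΔ hsq hns
  have h2d : 2 * d ≠ 0 := mul_ne_zero two_ne_zero hd0
  refine ncard_tangentLines_eq_two_of_roots hσ hH (c := d) (fun h => h2d ?_) (fun h => h2d ?_)
    (quadratic_eq_zero_iff hA hd) (mul_map_eq_one_of_root hA hC hd hσd)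
  · linear_combination hσd - h
  · rw [div_left_inj' (mul_ne_zero two_ne_zero hA)] at h
    linear_combination h

end Involution

section PowQ

variable {F : Type*} [Field F] {q : ℕ} {σ : F →+* F}

lemma Hf_eq_herm (hσq : ∀ x, σ x = x ^ q) (v : Fin 4 → F) : Hf q v = herm σ v v := by
  simp only [Hf, herm, hσq, pow_succ']

lemma setOf_sigmaVec_eq_tangentLines (hσq : ∀ x, σ x = x ^ q) (v : Fin 4 → F) :
    {L : Set (Fin 4 → F) | ∃ r : Fin 4 → F, IsSigmaVec q r ∧ Qf r = 0 ∧
      hForm q v r = 0 ∧ L = Fline r} = tangentLines σ v := by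
  have hvec : ∀ α β : F, ![α, β, β ^ q, α ^ q] = sigmaVec σ α β := by
    simp [sigmaVec, hσq]
  have hform : ∀ r, hForm q v r = herm σ v r := by
    simp [hForm, herm, hσq]
  ext L
  constructor
  · rintro ⟨r, ⟨hr, α, β, rfl⟩, hQ, hh, rfl⟩
    rw [hvec] at hr hQ hh ⊢
    exact ⟨α, β, hr, hQ, (hform _).symm.trans hh, rfl⟩
  · rintro ⟨α, β, hr, hQ, hh, rfl⟩
    exact ⟨_, ⟨hr, α, β, (hvec α β).symm⟩, hQ, (hform _).trans hh, rfl⟩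

end PowQ

section FiniteField

variable {F : Type*} [Field F] [Fintype F] {q : ℕ}

lemma ringChar_ne_two_of_card_eq_sq (hodd : Odd q) (hF : Fintype.card F = q ^ 2) :
    ringChar F ≠ 2 := by
  have : q ^ 2 % 2 = 1 := Nat.odd_iff.mp hodd.pow
  rw [ne_eq, FiniteField.even_card_iff_char_two, hF]
  omega

lemma isSquare_of_pow_eq_self (hodd : Odd q) (hF : Fintype.card F = q ^ 2) {x : F}
    (hx : x ^ q = x) : IsSquare x := by
  rcases eq_or_ne x 0 with rfl | hx0
  · exact IsSquare.zero
  rw [FiniteField.isSquare_iff (ringChar_ne_two_of_card_eq_sq hodd hF) hx0, hF]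
  obtain ⟨m, rfl⟩ := hodd
  have hxm : x ^ (2 * m) = 1 := mul_left_cancel₀ hx0 (by rw [← pow_succ', hx, mul_one])
  have hdiv : (2 * m + 1) ^ 2 / 2 = 2 * m * (m + 1) := by
    rw [show (2 * m + 1) ^ 2 = 2 * (2 * m * (m + 1)) + 1 by ring]
    omega
  rw [hdiv, pow_mul, hxm, one_pow]

end FiniteField

/-- Every point of a surface `S̃_ξ`, `ξ ∈ Z₂`, lies on exactly two extended tangent
planes of the subquadric `Q₀`. -/
theorem stmt19 (q : ℕ) (hq : ∃ p k : ℕ, p.Prime ∧ 0 < k ∧ q = p ^ k) (hodd : Odd q)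
    (F : Type*) [Field F] [Fintype F] (hF : Fintype.card F = q ^ 2)
    (ξ : F) (hξ : ξ ∈ Ztwo q F)
    (v : Fin 4 → F)
    (hS : Hf q v = 2 * ξ * Qf v ^ ((q + 1) / 2)) (hH : Hf q v ≠ 0) :
    Set.ncard {L : Set (Fin 4 → F) | ∃ r : Fin 4 → F, IsSigmaVec q r ∧ Qf r = 0 ∧
      hForm q v r = 0 ∧ L = Fline r} = 2 := by
  obtain ⟨p, k, hp, -, rfl⟩ := hq
  have : Fact p.Prime := ⟨hp⟩
  have : CharP F p := charP_of_card_eq_prime_pow (hF.trans (pow_mul p k 2).symm)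
  have : NeZero (2 : F) := ⟨Ring.two_ne_zero (ringChar_ne_two_of_card_eq_sq hodd hF)⟩
  set σ := iterateFrobenius F p k
  have hσq : ∀ x, σ x = x ^ p ^ k := fun x => rfl
  have hσ : Involutive σ := fun x => by
    rw [hσq, hσq, ← pow_mul, ← sq, ← hF, FiniteField.pow_card]
  obtain ⟨hξ0, ht, -, htns⟩ := hξ
  rw [Hf_eq_herm hσq] at hS hH
  have hΔ : herm σ v v ^ 2 - 4 * Qf v * σ (Qf v) = herm σ v v ^ 2 * (1 - (ξ ^ 2)⁻¹) := by
    have hQ : Qf v * σ (Qf v) = (Qf v ^ ((p ^ k + 1) / 2)) ^ 2 := by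
      rw [hσq, ← pow_succ', ← pow_mul, Nat.div_mul_cancel hodd.add_one.two_dvd]
    rw [mul_assoc, hQ, hS]
    field_simp
    ring
  rw [setOf_sigmaVec_eq_tangentLines hσq]
  refine ncard_tangentLines_eq_two hσ hH ?_ ?_ <;> rw [hΔ]
  · refine isSquare_of_pow_eq_self hodd hF ?_
    rw [mul_pow, ht, ← hσq, map_pow, map_herm_self hσ]
  · rintro ⟨s, hs, hst⟩
    refine htns ⟨s / herm σ v v, ?_, ?_⟩
    · rw [← hσq, map_div₀, hs, map_herm_self hσ]
    · rw [div_pow, eq_div_iff (pow_ne_zero 2 hH), ← hst, mul_comm]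
end
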